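/- (F-estimate, strong case.) Let ℓ > 0, ρ, I_ρ > 0, and K, EI ∈ 𝒜 with μ_K, μ_{EI} ∈ (1,2); set μ := max{μ_K, μ_{EI}}. Let v, φ, w, ψ : [0,ℓ] → ℝ with v, φ square integrable and w, ψ locally absolutely continuous on (0,ℓ], such that K(w'+ψ)² and EI·(ψ')² are integrable on (0,ℓ). If ℓ ≤ 1 then ∫₀^ℓ x·[ρ·v·(w'+ψ) + I_ρ·φ·ψ'] dx ≤ ℓ^{2−μ}·max{√(ρ/K(ℓ)), √(I_ρ/EI(ℓ))}·(1/2)∫₀^ℓ [ρ·v² + I_ρ·φ² + K(w'+ψ)² + EI·(ψ')²] dx, while if ℓ ≥ 1 the same inequality holds with ℓ^{2−μ} replaced by ℓ^{μ}. -/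
import Mathlib


open MeasureTheory Set Filter

noncomputable section

/-- A function `a : [0,ℓ] → ℝ` is in the class `𝒜` (with derivative `a'` on `(0,ℓ]`)
if it is continuous on `[0,ℓ]`, continuously differentiable on `(0,ℓ]`, positive on
`(0,ℓ]`, vanishes at `0`, and its degeneracy exponent
`μ = sup_{0<x≤ℓ} x|a'(x)|/a(x)` satisfies `μ < 2`. -/
structure ClassA (ℓ : ℝ) (a a' : ℝ → ℝ) (μ : ℝ) : Prop where
  cont : ContinuousOn a (Icc 0 ℓ)
  hasDeriv : ∀ x ∈ Ioc (0:ℝ) ℓ, HasDerivAt a (a' x) x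
  derivCont : ContinuousOn a' (Ioc 0 ℓ)
  pos : ∀ x ∈ Ioc (0:ℝ) ℓ, 0 < a x
  zero : a 0 = 0
  mu_eq : μ = sSup ((fun x => x * |a' x| / a x) '' Ioc 0 ℓ)
  mu_lt : μ < 2

/-- `u` is locally absolutely continuous on `(0,ℓ]` with (a.e.) derivative `u'`:
on every compact subinterval `[x,ℓ]` with `x > 0`, `u'` is integrable and `u` is the
integral of `u'`. -/
def LocACOn (ℓ : ℝ) (u u' : ℝ → ℝ) : Prop :=
  ∀ x ∈ Ioc (0:ℝ) ℓ, IntegrableOn u' (Icc x ℓ) ∧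
    ∀ y ∈ Icc x ℓ, u y - u x = ∫ t in x..y, u' t

/-- Partial derivative in time of a function of `(t,x)`. -/
def pt (f : ℝ → ℝ → ℝ) (t x : ℝ) : ℝ := deriv (fun s => f s x) t

/-- Partial derivative in space of a function of `(t,x)`. -/
def px (f : ℝ → ℝ → ℝ) (t x : ℝ) : ℝ := deriv (fun y => f t y) x

/-- Second partial derivative in time. -/
def ptt (f : ℝ → ℝ → ℝ) (t x : ℝ) : ℝ := deriv (fun s => pt f s x) t

/-- `(w,ψ)` is a classical (C²) solution of the degenerate Timoshenko system
`ρ w_tt − (K(x)(w_x+ψ))_x = 0`, `I_ρ ψ_tt − (EI(x) ψ_x)_x + K(x)(w_x+ψ) = 0`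
on `(S,T) × (0,ℓ)`. -/
structure TimoSol (ρ Iρ ℓ S T : ℝ) (K EI : ℝ → ℝ) (w ψ : ℝ → ℝ → ℝ) : Prop where
  smooth_w : ContDiffOn ℝ 2 (Function.uncurry w) (Icc S T ×ˢ Icc 0 ℓ)
  smooth_psi : ContDiffOn ℝ 2 (Function.uncurry ψ) (Icc S T ×ˢ Icc 0 ℓ)
  eq1 : ∀ t ∈ Ioo S T, ∀ x ∈ Ioo (0:ℝ) ℓ,
    ρ * ptt w t x - deriv (fun y => K y * (px w t y + ψ t y)) x = 0
  eq2 : ∀ t ∈ Ioo S T, ∀ x ∈ Ioo (0:ℝ) ℓ,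
    Iρ * ptt ψ t x - deriv (fun y => EI y * px ψ t y) x
      + K x * (px w t x + ψ t x) = 0

/-- The energy `E(t)` of the Timoshenko beam. -/
def energy (ρ Iρ ℓ : ℝ) (K EI : ℝ → ℝ) (w ψ : ℝ → ℝ → ℝ) (t : ℝ) : ℝ :=
  (1/2) * ∫ x in Ioo (0:ℝ) ℓ,
    (ρ * pt w t x ^ 2 + Iρ * pt ψ t x ^ 2
      + K x * (px w t x + ψ t x) ^ 2 + EI x * px ψ t x ^ 2)

/-- The modified energy `E_{γ,δ}(t)`. -/
def energyGD (ρ Iρ ℓ γ δ : ℝ) (K EI : ℝ → ℝ) (w ψ : ℝ → ℝ → ℝ) (t : ℝ) : ℝ :=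
  energy ρ Iρ ℓ K EI w ψ t + (1/2) * (γ * w t ℓ ^ 2 + δ * ψ t ℓ ^ 2)

/-- Degenerate-end boundary conditions at `x = 0`: Dirichlet conditions in the weakly
degenerate case, vanishing of the weighted flux in the strongly degenerate case. -/
def DegBC (T μK μEI : ℝ) (K EI : ℝ → ℝ) (w ψ : ℝ → ℝ → ℝ) : Prop :=
  (μK < 1 → ∀ t ∈ Icc (0:ℝ) T, w t 0 = 0) ∧
  (1 ≤ μK → ∀ t ∈ Icc (0:ℝ) T,
    Tendsto (fun x => K x * (px w t x + ψ t x)) (nhdsWithin 0 (Ioi 0)) (nhds 0)) ∧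
  (μEI < 1 → ∀ t ∈ Icc (0:ℝ) T, ψ t 0 = 0) ∧
  (1 ≤ μEI → ∀ t ∈ Icc (0:ℝ) T,
    Tendsto (fun x => EI x * px ψ t x) (nhdsWithin 0 (Ioi 0)) (nhds 0))

/-- `max{√(ρ/K(ℓ)), √(I_ρ/EI(ℓ))}`. -/
def Msqrt (ρ Iρ Kl EIl : ℝ) : ℝ :=
  max (Real.sqrt (ρ / Kl)) (Real.sqrt (Iρ / EIl))

/-- The constant `C_h := max{ℓ√(ρ/I_ρ), √(‖K‖_∞/EI(ℓ))·max{1,ℓ²}}`. -/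
def Ch (ρ Iρ ℓ Ksup EIl : ℝ) : ℝ :=
  max (ℓ * Real.sqrt (ρ / Iρ)) (Real.sqrt (Ksup / EIl) * max 1 (ℓ ^ 2))

/-- The constant `C_F` (weak case `μ_K, μ_{EI} ∈ [0,1]`, strong case otherwise). -/
def CF (ρ Iρ ℓ μK μEI Kl EIl : ℝ) : ℝ :=
  if μK ≤ 1 ∧ μEI ≤ 1 then ℓ * Msqrt ρ Iρ Kl EIl
  else max (ℓ ^ (2 - max μK μEI)) (ℓ ^ max μK μEI) * Msqrt ρ Iρ Kl EIl

/-- The Poincaré constant `C_{D,K,EI}` (Dirichlet case). -/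
def CDc (ℓ μ Ksup Kl EIl : ℝ) : ℝ :=
  ℓ ^ 2 * max (1 / Kl) (1 / EIl) * min 4 (1 / (2 - μ)) *
    max 2 (1 + 2 * ℓ ^ 2 * Ksup / Kl * min 4 (1 / (2 - μ)))

/-- The constant `C̃_{N1}`. -/
def CN1 (ℓ μ Ksup Kl EIl : ℝ) : ℝ :=
  2 * ℓ ^ 2 * max (1 / Kl) (1 / EIl) * min 2 (1 / (2 - μ)) *
    max 2 (1 + 2 * ℓ ^ 2 * Ksup / Kl * min 2 (1 / (2 - μ)))

/-- The constant `C̃_{N2}`. -/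
def CN2 (ℓ μ γ δ Ksup Kl : ℝ) : ℝ :=
  max (2 * ℓ / γ) (8 * ℓ ^ 3 * Ksup / (δ * Kl) * min 2 (1 / (2 - μ)))

/-- The Poincaré constant `C_{N,K,EI}` (Robin case). -/
def CNc (ℓ μ γ δ Ksup Kl EIl : ℝ) : ℝ :=
  max (CN1 ℓ μ Ksup Kl EIl) (CN2 ℓ μ γ δ Ksup Kl)

/-- The constant `C_{DL} := max{√ρ, √I_ρ}·√C_{D,K,EI}`. -/
def CDL (ρ Iρ ℓ μ Ksup Kl EIl : ℝ) : ℝ :=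
  max (Real.sqrt ρ) (Real.sqrt Iρ) * Real.sqrt (CDc ℓ μ Ksup Kl EIl)

/-- The constant `C_{NL} := max{√ρ, √I_ρ}·√C_{N,K,EI}`. -/
def CNL (ρ Iρ ℓ μ γ δ Ksup Kl EIl : ℝ) : ℝ :=
  max (Real.sqrt ρ) (Real.sqrt Iρ) * Real.sqrt (CNc ℓ μ γ δ Ksup Kl EIl)

lemma classA_le {ℓ : ℝ} {a a' : ℝ → ℝ} {μ : ℝ} (h : ClassA ℓ a a' μ) (hμ : 0 < μ) :
    ∀ x ∈ Ioc (0:ℝ) ℓ, x * |a' x| / a x ≤ μ := by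
  intro x hx
  by_cases hb : BddAbove ((fun x => x * |a' x| / a x) '' Ioc 0 ℓ)
  · rw [h.mu_eq]; exact le_csSup hb (mem_image_of_mem _ hx)
  · exfalso
    have := h.mu_eq
    rw [Real.sSup_of_not_bddAbove hb] at this
    linarith

lemma classA_key {ℓ : ℝ} {a a' : ℝ → ℝ} {μ : ℝ} (h : ClassA ℓ a a' μ) (hℓ : 0 < ℓ)
    (hμ0 : 0 < μ) : ∀ x ∈ Ioc (0:ℝ) ℓ, x ^ 2 * a ℓ ≤ ℓ ^ 2 * a x := by
  intro x hx
  obtain ⟨hx0, hxl⟩ := hx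
  set f : ℝ → ℝ := fun y => a y * y ^ (-μ) with hf
  have hsub : Icc x ℓ ⊆ Ioc 0 ℓ := fun y hy => ⟨lt_of_lt_of_le hx0 hy.1, hy.2⟩
  have hderiv : ∀ y ∈ Ioc (0:ℝ) ℓ,
      HasDerivAt f (a' y * y ^ (-μ) + a y * (-μ * y ^ (-μ - 1))) y := fun y hy =>
    (h.hasDeriv y hy).mul (Real.hasDerivAt_rpow_const (Or.inl hy.1.ne'))
  have hcont : ContinuousOn f (Icc x ℓ) := fun y hy =>
    ((hderiv y (hsub hy)).continuousAt).continuousWithinAt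
  have hanti : AntitoneOn f (Icc x ℓ) := by
    apply antitoneOn_of_deriv_nonpos (convex_Icc x ℓ) hcont
    · rw [interior_Icc]
      intro y hy
      exact ((hderiv y (hsub (Ioo_subset_Icc_self hy))).differentiableAt).differentiableWithinAt
    · rw [interior_Icc]
      intro y hy
      have hy' := hsub (Ioo_subset_Icc_self hy)
      rw [(hderiv y hy').deriv]
      have hy0 : (0:ℝ) < y := hy'.1
      have hb := classA_le h hμ0 y hy'
      have hay := h.pos y hy'
      have ha' : a' y * y ≤ μ * a y := by
        have h1 : y * |a' y| ≤ μ * a y := by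
          rw [div_le_iff₀ hay] at hb; linarith
        have h2 : a' y ≤ |a' y| := le_abs_self _
        nlinarith [abs_nonneg (a' y)]
      have hQ : (0:ℝ) < y ^ (-μ - 1) := Real.rpow_pos_of_pos hy0 _
      have hPQ : y ^ (-μ) = y ^ (-μ - 1) * y := by
        rw [← Real.rpow_add_one hy0.ne' (-μ - 1)]; norm_num
      rw [hPQ]
      nlinarith [mul_nonneg hQ.le (sub_nonneg.mpr ha')]
  have hfle : f ℓ ≤ f x := hanti ⟨le_refl x, hxl⟩ ⟨hxl, le_refl ℓ⟩ hxl
  simp only [hf] at hfle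
  have hll : ℓ ^ (-μ) * ℓ ^ μ = 1 := by
    rw [← Real.rpow_add hℓ]; norm_num
  have hxx : x ^ (-μ) * x ^ (2:ℝ) = x ^ (2 - μ) := by
    rw [← Real.rpow_add hx0]; ring_nf
  have hx2 : x ^ (2:ℝ) = x ^ 2 := by
    rw [show (2:ℝ) = ((2:ℕ):ℝ) by norm_num, Real.rpow_natCast]
  have hl2 : ℓ ^ (2 - μ) * ℓ ^ μ = ℓ ^ 2 := by
    rw [← Real.rpow_add hℓ, show 2 - μ + μ = ((2:ℕ):ℝ) by ring, Real.rpow_natCast]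
  have hle2 : x ^ (2 - μ) ≤ ℓ ^ (2 - μ) :=
    Real.rpow_le_rpow hx0.le hxl (by linarith [h.mu_lt])
  have hax : 0 < a x := h.pos x ⟨hx0, hxl⟩
  have hlm : (0:ℝ) < ℓ ^ μ := Real.rpow_pos_of_pos hℓ _
  calc x ^ 2 * a ℓ = (a ℓ * ℓ ^ (-μ)) * ℓ ^ μ * x ^ 2 := by
        rw [mul_assoc (a ℓ), hll, mul_one]; ring
    _ ≤ (a x * x ^ (-μ)) * ℓ ^ μ * x ^ 2 := by
        apply mul_le_mul_of_nonneg_right (mul_le_mul_of_nonneg_right hfle hlm.le) (sq_nonneg x)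
    _ = a x * ℓ ^ μ * (x ^ (-μ) * x ^ (2:ℝ)) := by rw [hx2]; ring
    _ = a x * ℓ ^ μ * x ^ (2 - μ) := by rw [hxx]
    _ ≤ a x * ℓ ^ μ * ℓ ^ (2 - μ) := by
        apply mul_le_mul_of_nonneg_left hle2 (mul_nonneg hax.le hlm.le)
    _ = ℓ ^ 2 * a x := by rw [mul_assoc, mul_comm (ℓ^μ), hl2]; ring

lemma amgm_bound (x ℓ ρ Kx Kl V S : ℝ) (hx0 : 0 < x) (hℓ0 : 0 < ℓ) (hρ : 0 < ρ)
    (hKx : 0 < Kx) (hKl : 0 < Kl) (hkey : x ^ 2 * Kl ≤ ℓ ^ 2 * Kx) :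
    x * (ρ * |V| * |S|) ≤ ℓ * Real.sqrt (ρ / Kl) * ((ρ * V ^ 2 + Kx * S ^ 2) / 2) := by
  have hxc : x * Real.sqrt ρ ≤ ℓ * Real.sqrt (ρ / Kl) * Real.sqrt Kx := by
    have h1 : x * Real.sqrt ρ = Real.sqrt (x ^ 2 * ρ) := by
      rw [Real.sqrt_mul (sq_nonneg x), Real.sqrt_sq hx0.le]
    have h2 : ℓ * Real.sqrt (ρ / Kl) * Real.sqrt Kx = Real.sqrt (ℓ ^ 2 * (ρ / Kl) * Kx) := by
      rw [Real.sqrt_mul (by positivity), Real.sqrt_mul (sq_nonneg ℓ), Real.sqrt_sq hℓ0.le]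
    rw [h1, h2]
    apply Real.sqrt_le_sqrt
    have he : ℓ ^ 2 * (ρ / Kl) * Kx = ℓ ^ 2 * Kx * ρ / Kl := by ring
    rw [he, le_div_iff₀ hKl]
    nlinarith [mul_le_mul_of_nonneg_right hkey hρ.le]
  have hAG : (Real.sqrt ρ * |V|) * (Real.sqrt Kx * |S|) ≤ (ρ * V ^ 2 + Kx * S ^ 2) / 2 := by
    nlinarith [sq_nonneg (Real.sqrt ρ * |V| - Real.sqrt Kx * |S|), Real.sq_sqrt hρ.le,
      Real.sq_sqrt hKx.le, sq_abs V, sq_abs S]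
  have hρs : Real.sqrt ρ * Real.sqrt ρ = ρ := Real.mul_self_sqrt hρ.le
  have hnn : 0 ≤ Real.sqrt ρ * (|V| * |S|) := by positivity
  calc x * (ρ * |V| * |S|) = (x * Real.sqrt ρ) * (Real.sqrt ρ * (|V| * |S|)) := by
        rw [show (x * Real.sqrt ρ) * (Real.sqrt ρ * (|V| * |S|))
            = x * ((Real.sqrt ρ * Real.sqrt ρ) * |V| * |S|) by ring, hρs]
    _ ≤ (ℓ * Real.sqrt (ρ / Kl) * Real.sqrt Kx) * (Real.sqrt ρ * (|V| * |S|)) :=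
        mul_le_mul_of_nonneg_right hxc hnn
    _ = (ℓ * Real.sqrt (ρ / Kl)) * ((Real.sqrt ρ * |V|) * (Real.sqrt Kx * |S|)) := by ring
    _ ≤ (ℓ * Real.sqrt (ρ / Kl)) * ((ρ * V ^ 2 + Kx * S ^ 2) / 2) :=
        mul_le_mul_of_nonneg_left hAG (by positivity)

/-- F-estimate, strong case `μ_K, μ_{EI} ∈ (1,2)`. -/
theorem statement_11 (ρ Iρ ℓ : ℝ) (hρ : 0 < ρ) (hIρ : 0 < Iρ) (hℓ : 0 < ℓ)
    (K K' EI EI' : ℝ → ℝ) (μK μEI μ : ℝ)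
    (hK : ClassA ℓ K K' μK) (hEI : ClassA ℓ EI EI' μEI)
    (hμK : 1 < μK) (hμEI : 1 < μEI) (hμ : μ = max μK μEI)
    (v φ w w' ψ ψ' : ℝ → ℝ)
    (hv : IntegrableOn (fun x => v x ^ 2) (Ioo 0 ℓ))
    (hφ : IntegrableOn (fun x => φ x ^ 2) (Ioo 0 ℓ))
    (hw : LocACOn ℓ w w') (hψ : LocACOn ℓ ψ ψ')
    (hKint : IntegrableOn (fun x => K x * (w' x + ψ x) ^ 2) (Ioo 0 ℓ))
    (hEIint : IntegrableOn (fun x => EI x * ψ' x ^ 2) (Ioo 0 ℓ)) :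
    (ℓ ≤ 1 →
      ∫ x in Ioo (0:ℝ) ℓ, x * (ρ * v x * (w' x + ψ x) + Iρ * φ x * ψ' x) ≤
        ℓ ^ (2 - μ) * Msqrt ρ Iρ (K ℓ) (EI ℓ) *
          ((1/2) * ∫ x in Ioo (0:ℝ) ℓ,
            (ρ * v x ^ 2 + Iρ * φ x ^ 2 + K x * (w' x + ψ x) ^ 2
              + EI x * ψ' x ^ 2))) ∧
    (1 ≤ ℓ →
      ∫ x in Ioo (0:ℝ) ℓ, x * (ρ * v x * (w' x + ψ x) + Iρ * φ x * ψ' x) ≤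
        ℓ ^ μ * Msqrt ρ Iρ (K ℓ) (EI ℓ) *
          ((1/2) * ∫ x in Ioo (0:ℝ) ℓ,
            (ρ * v x ^ 2 + Iρ * φ x ^ 2 + K x * (w' x + ψ x) ^ 2
              + EI x * ψ' x ^ 2))) := by
  have hμ1 : 1 < μ := by rw [hμ]; exact lt_max_of_lt_left hμK
  have hμ2 : μ < 2 := by rw [hμ]; exact max_lt hK.mu_lt hEI.mu_lt
  have hKl : 0 < K ℓ := hK.pos ℓ ⟨hℓ, le_refl ℓ⟩
  have hEIl : 0 < EI ℓ := hEI.pos ℓ ⟨hℓ, le_refl ℓ⟩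
  set M : ℝ := Msqrt ρ Iρ (K ℓ) (EI ℓ) with hMdef
  have hM0 : 0 ≤ M := le_trans (Real.sqrt_nonneg _) (le_max_left _ _)
  have hcM : Real.sqrt (ρ / K ℓ) ≤ M := le_max_left _ _
  have hdM : Real.sqrt (Iρ / EI ℓ) ≤ M := le_max_right _ _
  set Sf : ℝ → ℝ := fun x => ρ * v x ^ 2 + Iρ * φ x ^ 2 + K x * (w' x + ψ x) ^ 2
      + EI x * ψ' x ^ 2 with hSf
  set g : ℝ → ℝ := fun x => x * (ρ * v x * (w' x + ψ x) + Iρ * φ x * ψ' x) with hg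
  have hSint : IntegrableOn Sf (Ioo 0 ℓ) :=
    (((hv.const_mul ρ).add (hφ.const_mul Iρ)).add hKint).add hEIint
  have hS0 : ∀ x ∈ Ioo (0:ℝ) ℓ, 0 ≤ Sf x := by
    intro x hx
    have h1 := (hK.pos x ⟨hx.1, hx.2.le⟩).le
    have h2 := (hEI.pos x ⟨hx.1, hx.2.le⟩).le
    have := sq_nonneg (v x); have := sq_nonneg (φ x)
    have := sq_nonneg (w' x + ψ x); have := sq_nonneg (ψ' x)
    simp only [hSf]
    nlinarith [mul_nonneg h1 (sq_nonneg (w' x + ψ x)), mul_nonneg h2 (sq_nonneg (ψ' x))]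
  have hI0 : 0 ≤ ∫ x in Ioo (0:ℝ) ℓ, Sf x := setIntegral_nonneg measurableSet_Ioo hS0
  have hpt : ∀ x ∈ Ioo (0:ℝ) ℓ, |g x| ≤ ℓ * M * ((1/2) * Sf x) := by
    intro x hx
    have hKx := hK.pos x ⟨hx.1, hx.2.le⟩
    have hEIx := hEI.pos x ⟨hx.1, hx.2.le⟩
    have key1 := classA_key hK hℓ (by linarith) x ⟨hx.1, hx.2.le⟩
    have key2 := classA_key hEI hℓ (by linarith) x ⟨hx.1, hx.2.le⟩
    have t1 := amgm_bound x ℓ ρ (K x) (K ℓ) (v x) (w' x + ψ x) hx.1 hℓ hρ hKx hKl key1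
    have t2 := amgm_bound x ℓ Iρ (EI x) (EI ℓ) (φ x) (ψ' x) hx.1 hℓ hIρ hEIx hEIl key2
    have habs : |g x| ≤ x * (ρ * |v x| * |w' x + ψ x|) + x * (Iρ * |φ x| * |ψ' x|) := by
      simp only [hg]
      rw [abs_mul, abs_of_pos hx.1]
      calc x * |ρ * v x * (w' x + ψ x) + Iρ * φ x * ψ' x|
          ≤ x * (|ρ * v x * (w' x + ψ x)| + |Iρ * φ x * ψ' x|) :=
            mul_le_mul_of_nonneg_left (abs_add_le _ _) hx.1.le
        _ = x * (ρ * |v x| * |w' x + ψ x|) + x * (Iρ * |φ x| * |ψ' x|) := by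
            rw [abs_mul, abs_mul, abs_mul, abs_mul, abs_of_pos hρ, abs_of_pos hIρ]; ring
    have q1 : 0 ≤ (ρ * v x ^ 2 + K x * (w' x + ψ x) ^ 2) / 2 :=
      div_nonneg (add_nonneg (mul_nonneg hρ.le (sq_nonneg _))
        (mul_nonneg hKx.le (sq_nonneg _))) (by norm_num)
    have q2 : 0 ≤ (Iρ * φ x ^ 2 + EI x * ψ' x ^ 2) / 2 :=
      div_nonneg (add_nonneg (mul_nonneg hIρ.le (sq_nonneg _))
        (mul_nonneg hEIx.le (sq_nonneg _))) (by norm_num)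
    have b1 : ℓ * Real.sqrt (ρ / K ℓ) * ((ρ * v x ^ 2 + K x * (w' x + ψ x) ^ 2) / 2)
        ≤ ℓ * M * ((ρ * v x ^ 2 + K x * (w' x + ψ x) ^ 2) / 2) :=
      mul_le_mul_of_nonneg_right (mul_le_mul_of_nonneg_left hcM hℓ.le) q1
    have b2 : ℓ * Real.sqrt (Iρ / EI ℓ) * ((Iρ * φ x ^ 2 + EI x * ψ' x ^ 2) / 2)
        ≤ ℓ * M * ((Iρ * φ x ^ 2 + EI x * ψ' x ^ 2) / 2) :=
      mul_le_mul_of_nonneg_right (mul_le_mul_of_nonneg_left hdM hℓ.le) q2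
    simp only [hSf]
    linarith [t1, t2, b1, b2, habs]
  have hmain : (∫ x in Ioo (0:ℝ) ℓ, g x) ≤ ℓ * M * ((1/2) * ∫ x in Ioo (0:ℝ) ℓ, Sf x) := by
    by_cases hint : IntegrableOn g (Ioo 0 ℓ)
    · have hGint : IntegrableOn (fun x => ℓ * M * ((1/2) * Sf x)) (Ioo 0 ℓ) :=
        (hSint.const_mul (ℓ * M * (1/2))).congr (ae_of_all _ fun x => by ring)
      calc (∫ x in Ioo (0:ℝ) ℓ, g x) ≤ ∫ x in Ioo (0:ℝ) ℓ, ℓ * M * ((1/2) * Sf x) :=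
            setIntegral_mono_on hint hGint measurableSet_Ioo
              (fun x hx => (le_abs_self _).trans (hpt x hx))
        _ = ℓ * M * ((1/2) * ∫ x in Ioo (0:ℝ) ℓ, Sf x) := by
            rw [show (fun x => ℓ * M * ((1/2) * Sf x)) = fun x => (ℓ * M * (1/2)) * Sf x
              from funext fun x => by ring, MeasureTheory.integral_const_mul]; ring
    · rw [integral_undef hint]
      exact mul_nonneg (mul_nonneg hℓ.le hM0) (by linarith)
  have hMh : 0 ≤ M * ((1/2) * ∫ x in Ioo (0:ℝ) ℓ, Sf x) := mul_nonneg hM0 (by linarith)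
  constructor
  · intro hl1
    have hexp : ℓ ≤ ℓ ^ (2 - μ) := by
      have h1 : ℓ ^ (1:ℝ) ≤ ℓ ^ (2 - μ) :=
        Real.rpow_le_rpow_of_exponent_ge hℓ hl1 (by linarith)
      simpa using h1
    calc (∫ x in Ioo (0:ℝ) ℓ, g x) ≤ ℓ * M * ((1/2) * ∫ x in Ioo (0:ℝ) ℓ, Sf x) := hmain
      _ = ℓ * (M * ((1/2) * ∫ x in Ioo (0:ℝ) ℓ, Sf x)) := by ring
      _ ≤ ℓ ^ (2 - μ) * (M * ((1/2) * ∫ x in Ioo (0:ℝ) ℓ, Sf x)) :=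
          mul_le_mul_of_nonneg_right hexp hMh
      _ = ℓ ^ (2 - μ) * M * ((1/2) * ∫ x in Ioo (0:ℝ) ℓ, Sf x) := by ring
  · intro hl1
    have hexp : ℓ ≤ ℓ ^ μ := by
      have h1 : ℓ ^ (1:ℝ) ≤ ℓ ^ μ :=
        Real.rpow_le_rpow_of_exponent_le hl1 (by linarith)
      simpa using h1
    calc (∫ x in Ioo (0:ℝ) ℓ, g x) ≤ ℓ * M * ((1/2) * ∫ x in Ioo (0:ℝ) ℓ, Sf x) := hmain
      _ = ℓ * (M * ((1/2) * ∫ x in Ioo (0:ℝ) ℓ, Sf x)) := by ring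
      _ ≤ ℓ ^ μ * (M * ((1/2) * ∫ x in Ioo (0:ℝ) ℓ, Sf x)) :=
          mul_le_mul_of_nonneg_right hexp hMh
      _ = ℓ ^ μ * M * ((1/2) * ∫ x in Ioo (0:ℝ) ℓ, Sf x) := by ring

end
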